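/- Let L̄ be a symmetric PSD matrix with L̄1 = 0 whose eigenvalues satisfy 0 < λ_2 ≤ ... ≤ λ_m on the orthogonal complement of 1, and let L̃ be a symmetric PSD matrix with spectral norm ζ ≥ 0. Then for any α ∈ (0, min{2λ_2/(λ_2² + 2ζ), 2λ_m/(λ_m² + 2ζ)}), the spectral norm of (I − αL̄)² + 2α²L̃ − (1/m)11ᵀ is strictly less than 1. -/

import Mathlib

open Matrix BigOperators

noncomputable section

/-- The averaging matrix `J = (1/m) 1 1ᵀ`. -/
def Jmat (m : ℕ) : Matrix (Fin m) (Fin m) ℝ := Matrix.of fun _ _ => (1 : ℝ) / m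

/-- Spectral norm (largest singular value). -/
def specNorm {m : ℕ} (A : Matrix (Fin m) (Fin m) ℝ) : ℝ :=
  sSup {r : ℝ | ∃ x : Fin m → ℝ, (∑ i, (x i)^2) = 1 ∧ r = Real.sqrt (∑ i, ((A *ᵥ x) i)^2)}

/-! The averaging projection `J` satisfies `L̄ J = J L̄ = 0`, so `(I - αL̄)² - J = M²` for the
symmetric matrix `M = I - αL̄ - J`. The quadratic form of `M` at `x` is that of `I - αL̄` at the
projection of `x` onto `1⊥`, where it lies between `1 - αλ_m` and `1 - αλ₂` times the squared norm;
since the norm of a symmetric operator is the supremum of its Rayleigh quotient,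
`‖M‖ ≤ ρ := max |1 - αλ₂| |1 - αλ_m|`. The triangle inequality then gives
`‖M² + 2α²L̃‖ ≤ ρ² + 2α²ζ`, and `(1 - αλ)² + 2α²ζ < 1` whenever `0 < α < 2λ/(λ² + 2ζ)`. -/

theorem sq_one_sub_sub_of_isIdempotentElem {R : Type*} [Ring R] {L J : R}
    (hJ : IsIdempotentElem J) (hLJ : L * J = 0) (hJL : J * L = 0) :
    (1 - L - J) ^ 2 = (1 - L) ^ 2 - J := by
  simp only [sq, sub_mul, mul_sub, one_mul, mul_one, hLJ, hJL, hJ.eq]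
  abel

theorem one_sub_mul_sq_add_lt_one {α lam ζ : ℝ} (hα0 : 0 < α) (hζ : 0 ≤ ζ)
    (hα : α < 2 * lam / (lam ^ 2 + 2 * ζ)) : (1 - α * lam) ^ 2 + 2 * α ^ 2 * ζ < 1 := by
  have hd : 0 < lam ^ 2 + 2 * ζ := by
    refine (by positivity : (0 : ℝ) ≤ lam ^ 2 + 2 * ζ).lt_of_ne fun hd => ?_
    rw [← hd, div_zero] at hα
    exact hα.not_gt hα0
  rw [lt_div_iff₀ hd] at hα
  nlinarith

theorem abs_sub_mul_le_max_mul {α lam2 lamM t q : ℝ} (hα : 0 ≤ α) (ht : 0 ≤ t)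
    (h2 : lam2 * t ≤ q) (hM : q ≤ lamM * t) :
    |t - α * q| ≤ max |1 - α * lam2| |1 - α * lamM| * t := by
  have hle2 : (1 - α * lam2) * t ≤ max |1 - α * lam2| |1 - α * lamM| * t :=
    mul_le_mul_of_nonneg_right ((le_abs_self _).trans (le_max_left _ _)) ht
  have hleM : -(1 - α * lamM) * t ≤ max |1 - α * lam2| |1 - α * lamM| * t :=
    mul_le_mul_of_nonneg_right ((neg_le_abs _).trans (le_max_right _ _)) ht
  have hq2 := mul_le_mul_of_nonneg_left h2 hα
  have hqM := mul_le_mul_of_nonneg_left hM hα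
  exact abs_le.mpr ⟨by linarith, by linarith⟩

theorem ContinuousLinearMap.norm_le_of_abs_re_inner_le {𝕜 E : Type*} [RCLike 𝕜]
    [NormedAddCommGroup E] [InnerProductSpace 𝕜 E] {T : E →L[𝕜] E} (hT : T.IsSymmetric)
    {c : ℝ} (hc : 0 ≤ c) (h : ∀ x, |RCLike.re (inner 𝕜 (T x) x)| ≤ c * ‖x‖ ^ 2) : ‖T‖ ≤ c := by
  rw [T.norm_eq_iSup_rayleighQuotient hT]
  refine ciSup_le fun x => ?_
  rcases eq_or_ne x 0 with rfl | hx
  · simpa using hc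
  · rw [ContinuousLinearMap.rayleighQuotient, ContinuousLinearMap.reApplyInnerSelf_apply, abs_div,
      abs_sq, div_le_iff₀ (by positivity)]
    exact h x

namespace Matrix

theorem dotProduct_mulVec_transpose_mul_mul {R m n : Type*} [CommSemiring R] [Fintype m]
    [Fintype n] (P : Matrix m n R) (B : Matrix m m R) (z : n → R) :
    (P *ᵥ z) ⬝ᵥ B *ᵥ (P *ᵥ z) = z ⬝ᵥ (Pᵀ * B * P) *ᵥ z := by
  rw [← mulVec_mulVec, ← mulVec_mulVec, dotProduct_mulVec z, vecMul_transpose, dotProduct_comm]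

theorem norm_toEuclideanCLM_le_of_abs_dotProduct_mulVec_le {n : Type*} [Fintype n]
    [DecidableEq n] {A : Matrix n n ℝ} (hA : A.IsHermitian) {c : ℝ} (hc : 0 ≤ c)
    (h : ∀ x, |x ⬝ᵥ A *ᵥ x| ≤ c * ∑ i, x i ^ 2) : ‖toEuclideanCLM (𝕜 := ℝ) A‖ ≤ c :=
  ContinuousLinearMap.norm_le_of_abs_re_inner_le (isSymmetric_toEuclideanLin_iff.mpr hA) hc
    fun x => by
      simpa [real_inner_comm, inner_toEuclideanCLM, EuclideanSpace.real_norm_sq_eq] using h x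

end Matrix

theorem specNorm_eq_norm_toEuclideanCLM {m : ℕ} (A : Matrix (Fin m) (Fin m) ℝ) :
    specNorm A = ‖toEuclideanCLM (𝕜 := ℝ) A‖ := by
  rw [← ContinuousLinearMap.sSup_sphere_eq_norm, specNorm]
  congr 1
  ext r
  simp only [Set.mem_ofPred_eq, Set.mem_image, mem_sphere_zero_iff_norm, EuclideanSpace.norm_eq,
    Real.norm_eq_abs, sq_abs, Real.sqrt_eq_one]
  constructor
  · rintro ⟨x, hx, rfl⟩
    exact ⟨WithLp.toLp 2 x, by simpa using hx, by simp⟩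
  · rintro ⟨x, hx, rfl⟩
    exact ⟨WithLp.ofLp x, hx, by simp⟩

theorem Jmat_mulVec {m : ℕ} (x : Fin m → ℝ) : Jmat m *ᵥ x = fun _ => (∑ i, x i) / m := by
  ext i
  simp [Jmat, mulVec, dotProduct, Finset.mul_sum, div_eq_inv_mul]

theorem sum_Jmat_mulVec {m : ℕ} (z : Fin m → ℝ) : ∑ i, (Jmat m *ᵥ z) i = ∑ i, z i := by
  obtain rfl | hm := eq_or_ne m 0
  · simp
  · simp only [Jmat_mulVec, Finset.sum_const, Finset.card_univ, Fintype.card_fin, nsmul_eq_mul]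
    field_simp

theorem dotProduct_Jmat_mulVec {m : ℕ} (z : Fin m → ℝ) :
    z ⬝ᵥ Jmat m *ᵥ z = (∑ i, z i) ^ 2 / m := by
  simp [Jmat_mulVec, dotProduct, ← Finset.sum_mul, sq, mul_div_assoc]

theorem transpose_Jmat (m : ℕ) : (Jmat m)ᵀ = Jmat m := rfl

theorem isHermitian_Jmat (m : ℕ) : (Jmat m).IsHermitian := by
  ext i j
  simp [Jmat]

theorem isIdempotentElem_Jmat (m : ℕ) : IsIdempotentElem (Jmat m) := by
  ext i j
  rcases eq_or_ne (m : ℝ) 0 with hm | hm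
  · simp [Jmat, mul_apply, hm]
  · simp [Jmat, mul_apply]
    field_simp

theorem mul_Jmat_eq_zero {m : ℕ} {L : Matrix (Fin m) (Fin m) ℝ}
    (hker : L *ᵥ (fun _ => (1 : ℝ)) = 0) : L * Jmat m = 0 := by
  ext i j
  simpa [Jmat, mul_apply, mulVec, dotProduct, ← Finset.sum_mul] using
    congrArg (· * (1 / (m : ℝ))) (congrFun hker i)

theorem Jmat_mul_eq_zero {m : ℕ} {L : Matrix (Fin m) (Fin m) ℝ} (hL : L.IsHermitian)
    (hker : L *ᵥ (fun _ => (1 : ℝ)) = 0) : Jmat m * L = 0 := by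
  have h := congrArg conjTranspose (mul_Jmat_eq_zero hker)
  rwa [conjTranspose_mul, hL.eq, (isHermitian_Jmat m).eq, conjTranspose_zero] at h

theorem abs_dotProduct_one_sub_smul_sub_Jmat_mulVec_le {m : ℕ} {L : Matrix (Fin m) (Fin m) ℝ}
    (hL : L.IsHermitian) (hker : L *ᵥ (fun _ => (1 : ℝ)) = 0) {lam2 lamM : ℝ}
    (hspec : ∀ x : Fin m → ℝ, (∑ i, x i) = 0 →
      lam2 * (∑ i, (x i)^2) ≤ x ⬝ᵥ (L *ᵥ x) ∧ x ⬝ᵥ (L *ᵥ x) ≤ lamM * (∑ i, (x i)^2))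
    {α : ℝ} (hα : 0 ≤ α) (z : Fin m → ℝ) :
    |z ⬝ᵥ (1 - α • L - Jmat m) *ᵥ z| ≤ max |1 - α * lam2| |1 - α * lamM| * ∑ i, z i ^ 2 := by
  set P := 1 - Jmat m
  set w := P *ᵥ z
  have hPP : Pᵀ * P = P := by
    rw [transpose_sub, transpose_one, transpose_Jmat]
    exact (isIdempotentElem_Jmat m).one_sub.eq
  have hPLP : Pᵀ * L * P = L := by
    simp only [P, transpose_sub, transpose_one, transpose_Jmat, sub_mul, mul_sub, one_mul, mul_one,
      mul_Jmat_eq_zero hker, Jmat_mul_eq_zero hL hker, sub_zero]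
  have hww : ∑ i, w i ^ 2 = z ⬝ᵥ P *ᵥ z := by
    have h := dotProduct_mulVec_transpose_mul_mul P 1 z
    rw [one_mulVec, mul_one, hPP] at h
    simpa only [dotProduct, sq] using h
  have hwLw : w ⬝ᵥ L *ᵥ w = z ⬝ᵥ L *ᵥ z := by
    rw [dotProduct_mulVec_transpose_mul_mul, hPLP]
  have hquad : z ⬝ᵥ (1 - α • L - Jmat m) *ᵥ z = ∑ i, w i ^ 2 - α * (w ⬝ᵥ L *ᵥ w) := by
    simp only [hww, hwLw, P, sub_mulVec, smul_mulVec, dotProduct_sub, dotProduct_smul, smul_eq_mul]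
    ring
  have hsum : ∑ i, w i = 0 := by
    simp [w, P, sub_mulVec, sum_Jmat_mulVec]
  have hnorm : ∑ i, w i ^ 2 ≤ ∑ i, z i ^ 2 := by
    rw [hww, sub_mulVec, dotProduct_sub, one_mulVec, dotProduct_Jmat_mulVec, sub_le_iff_le_add]
    simp only [dotProduct, ← sq]
    exact le_add_of_nonneg_right (by positivity)
  obtain ⟨h2, hM⟩ := hspec w hsum
  rw [hquad]
  exact (abs_sub_mul_le_max_mul hα (by positivity) h2 hM).trans (by gcongr)

theorem spectral_norm_lt_one_general {m : ℕ}
    (Lbar Ltil : Matrix (Fin m) (Fin m) ℝ)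
    (hLbar : Lbar.PosSemidef)
    (hker : Lbar *ᵥ (fun _ => (1 : ℝ)) = 0)
    (lam2 lamM : ℝ)
    (hspec : ∀ x : Fin m → ℝ, (∑ i, x i) = 0 →
      lam2 * (∑ i, (x i)^2) ≤ x ⬝ᵥ (Lbar *ᵥ x) ∧
      x ⬝ᵥ (Lbar *ᵥ x) ≤ lamM * (∑ i, (x i)^2))
    (ζ : ℝ) (hζspec : specNorm Ltil = ζ)
    (α : ℝ)
    (hα : α ∈ Set.Ioo (0 : ℝ)
      (min (2 * lam2 / (lam2 ^ 2 + 2 * ζ)) (2 * lamM / (lamM ^ 2 + 2 * ζ)))) :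
    specNorm ((1 - α • Lbar) ^ 2 + (2 * α ^ 2) • Ltil - Jmat m) < 1 := by
  obtain ⟨hα0, hαlt⟩ := hα
  have hL := hLbar.isHermitian
  set ρ := max |1 - α * lam2| |1 - α * lamM|
  set M := 1 - α • Lbar - Jmat m
  rw [specNorm_eq_norm_toEuclideanCLM] at hζspec ⊢
  have hζ : 0 ≤ ζ := hζspec ▸ norm_nonneg _
  have hM : ‖toEuclideanCLM (𝕜 := ℝ) M‖ ≤ ρ :=
    norm_toEuclideanCLM_le_of_abs_dotProduct_mulVec_le
      ((isHermitian_one.sub (hL.smul (IsSelfAdjoint.all α))).sub (isHermitian_Jmat m))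
      (by positivity) (abs_dotProduct_one_sub_smul_sub_Jmat_mulVec_le hL hker hspec hα0.le)
  have hA : (1 - α • Lbar) ^ 2 + (2 * α ^ 2) • Ltil - Jmat m = M ^ 2 + (2 * α ^ 2) • Ltil := by
    rw [sq_one_sub_sub_of_isIdempotentElem (isIdempotentElem_Jmat m)
      (by rw [smul_mul_assoc, mul_Jmat_eq_zero hker, smul_zero])
      (by rw [mul_smul_comm, Jmat_mul_eq_zero hL hker, smul_zero])]
    abel
  have hρ : ρ ^ 2 + 2 * α ^ 2 * ζ < 1 := by
    obtain h | h : ρ = |1 - α * lam2| ∨ ρ = |1 - α * lamM| := max_choice _ _ <;> rw [h, sq_abs]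
    · exact one_sub_mul_sq_add_lt_one hα0 hζ (hαlt.trans_le (min_le_left _ _))
    · exact one_sub_mul_sq_add_lt_one hα0 hζ (hαlt.trans_le (min_le_right _ _))
  rw [hA, map_add, map_pow, map_smul]
  calc _ ≤ ‖toEuclideanCLM (𝕜 := ℝ) M‖ ^ 2 + 2 * α ^ 2 * ζ := by
        refine norm_add_le_of_le (norm_pow_le' _ two_pos) ?_
        rw [norm_smul, hζspec, Real.norm_of_nonneg (by positivity)]
    _ ≤ ρ ^ 2 + 2 * α ^ 2 * ζ := by gcongr
    _ < 1 := hρ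

/-- let `L̄` be symmetric PSD with `L̄ 1 = 0` and spectrum contained in
`[λ₂, λ_m]` (with `0 < λ₂ ≤ λ_m`) on the orthogonal complement of `1`, and let `L̃` be
symmetric PSD with spectral norm `ζ ≥ 0`. Then for every
`α ∈ (0, min{2λ₂/(λ₂² + 2ζ), 2λ_m/(λ_m² + 2ζ)})`, the spectral norm of
`(I − αL̄)² + 2α²L̃ − (1/m)11ᵀ` is strictly less than 1. -/
theorem spectral_norm_lt_one {m : ℕ}
    (Lbar Ltil : Matrix (Fin m) (Fin m) ℝ)
    (hLbar : Lbar.PosSemidef) (hLtil : Ltil.PosSemidef)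
    (hker : Lbar *ᵥ (fun _ => (1 : ℝ)) = 0)
    (lam2 lamM : ℝ) (hlam2 : 0 < lam2) (hle : lam2 ≤ lamM)
    (hspec : ∀ x : Fin m → ℝ, (∑ i, x i) = 0 →
      lam2 * (∑ i, (x i)^2) ≤ x ⬝ᵥ (Lbar *ᵥ x) ∧
      x ⬝ᵥ (Lbar *ᵥ x) ≤ lamM * (∑ i, (x i)^2))
    (ζ : ℝ) (hζ : 0 ≤ ζ) (hζspec : specNorm Ltil = ζ)
    (α : ℝ)
    (hα : α ∈ Set.Ioo (0 : ℝ)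
      (min (2 * lam2 / (lam2 ^ 2 + 2 * ζ)) (2 * lamM / (lamM ^ 2 + 2 * ζ)))) :
    specNorm ((1 - α • Lbar) ^ 2 + (2 * α ^ 2) • Ltil - Jmat m) < 1 :=
  spectral_norm_lt_one_general Lbar Ltil hLbar hker lam2 lamM hspec ζ hζspec α hα

end
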